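/- Let U be a finite vertex set with |U| = N, let A ⊆ U × U be a finite arc set, let β ≥ 1 and L > 0, and suppose that every subset R ⊆ U with ∅ ≠ R ≠ U and β·|∂⁺R| ≥ |∂R| satisfies |∂⁺R| ≥ L·min{|R|, |U∖R|}. Sample each arc of A independently with probability p ∈ [0,1]. Then the probability that there exists a subset R ⊆ U with ∅ ≠ R ≠ U and β·|∂⁺R| ≥ |∂R| such that no arc of ∂⁺R is sampled is at most Σ_{k=1}^{⌊N/2⌋} 2·N^k·(1−p)^{kL}. -/

import Mathlib

/-!
Union bound over the cuts `R` in question. For a fixed cut the event "no arc of `∂⁺R` is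
sampled" has probability `(1 - p) ^ |∂⁺R| ≤ (1 - p) ^ (k L)` with `k = min (|R|, |U \ R|)`,
and a cut with a given `k` is either a `k`-set or the complement of one, so there are at most
`2 · (N choose k) ≤ 2 N ^ k` of them; moreover `1 ≤ k ≤ N / 2` for a nontrivial cut.
-/

open Finset MeasureTheory
open scoped ENNReal

open scoped Classical in
/-- The out-boundary `∂⁺R`: arcs `(u,v) ∈ A` with `u ∈ R` and `v ∉ R`. -/
noncomputable def outBoundary {U : Type*} (A : Finset (U × U)) (R : Finset U) :
    Finset (U × U) :=
  A.filter fun e => e.1 ∈ R ∧ e.2 ∉ R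

open scoped Classical in
/-- The boundary `∂R`: arcs `(u,v) ∈ A` with exactly one endpoint in `R`. -/
noncomputable def boundary {U : Type*} (A : Finset (U × U)) (R : Finset U) :
    Finset (U × U) :=
  A.filter fun e => (e.1 ∈ R ∧ e.2 ∉ R) ∨ (e.2 ∈ R ∧ e.1 ∉ R)

open scoped NNReal

theorem pi_bernoulli_setOf_forall_mem_eq_false {ι : Type*} [Fintype ι] (q : ℝ≥0) (hq : q ≤ 1) (s : Finset ι) :
    Measure.pi (fun _ : ι => (PMF.bernoulli q hq).toMeasure) {ω | ∀ i ∈ s, ω i = false}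
      = ((1 - q : ℝ≥0) : ℝ≥0∞) ^ #s := by
  have hpi : {ω : ι → Bool | ∀ i ∈ s, ω i = false} = (s : Set ι).pi fun _ => {false} := by
    ext ω; simp
  rw [hpi, Measure.pi_pi_finset, PMF.toMeasure_apply_singleton _ _ (measurableSet_singleton _),
    PMF.bernoulli_apply, Finset.prod_const]
  rfl

theorem ENNReal.coe_pow_le_ofReal_rpow {x : ℝ≥0} (hx : x ≤ 1) {n : ℕ} {e : ℝ} (he : 0 ≤ e)
    (hen : e ≤ n) : (x : ℝ≥0∞) ^ n ≤ ENNReal.ofReal ((x : ℝ) ^ e) := by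
  rw [← ENNReal.ofReal_coe_nnreal, ← ENNReal.ofReal_pow x.coe_nonneg, ← Real.rpow_natCast]
  exact ENNReal.ofReal_le_ofReal (Real.rpow_le_rpow_of_exponent_ge' x.coe_nonneg hx he hen)

section Cuts

variable {U : Type*} [Fintype U] [DecidableEq U]

theorem min_card_sdiff_mem_Icc {R : Finset U} (hR : R ≠ ∅) (hRU : R ≠ univ) :
    min #R #(univ \ R) ∈ Icc 1 (Fintype.card U / 2) := by
  have hpos : 0 < #R := card_pos.2 (nonempty_iff_ne_empty.2 hR)
  have hlt : #R < Fintype.card U := card_lt_card (ssubset_univ_iff.2 hRU)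
  rw [card_univ_sdiff, mem_Icc]
  omega

theorem card_filter_min_card_sdiff_eq_le (k : ℕ) :
    #{R : Finset U | min #R #(univ \ R) = k} ≤ 2 * Fintype.card U ^ k := by
  have hsub : ({R : Finset U | min #R #(univ \ R) = k} : Finset _) ⊆
      powersetCard k univ ∪ (powersetCard k univ).image (univ \ ·) := by
    intro R hR
    simp only [mem_filter, mem_univ, true_and] at hR
    rcases min_choice #R #(univ \ R) with h | h
    · exact mem_union_left _ (mem_powersetCard_univ.2 (h ▸ hR))
    · exact mem_union_right _ (mem_image.2 ⟨univ \ R, mem_powersetCard_univ.2 (h ▸ hR),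
        Finset.sdiff_sdiff_eq_self (subset_univ R)⟩)
  calc #{R : Finset U | min #R #(univ \ R) = k}
      ≤ #(powersetCard k (univ : Finset U)) + #((powersetCard k univ).image (univ \ ·)) :=
        (card_le_card hsub).trans (card_union_le _ _)
    _ ≤ 2 * Fintype.card U ^ k := by
        have := (card_image_le (s := powersetCard k (univ : Finset U)) (f := (univ \ ·)))
        rw [card_powersetCard, card_univ] at *
        linarith [Nat.choose_le_pow (Fintype.card U) k]

theorem sum_min_card_sdiff_le {S : Finset (Finset U)} (hS : ∀ R ∈ S, R ≠ ∅ ∧ R ≠ univ)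
    (f : ℕ → ℝ) (hf : ∀ k, 0 ≤ f k) :
    ∑ R ∈ S, f (min #R #(univ \ R))
      ≤ ∑ k ∈ Icc 1 (Fintype.card U / 2), 2 * (Fintype.card U : ℝ) ^ k * f k := by
  rw [← sum_fiberwise_of_maps_to fun R hR => min_card_sdiff_mem_Icc (hS R hR).1 (hS R hR).2]
  refine sum_le_sum fun k _ => ?_
  calc ∑ R ∈ S.filter (fun R : Finset U => min #R #(univ \ R) = k), f (min #R #(univ \ R))
      = #(S.filter fun R : Finset U => min #R #(univ \ R) = k) * f k := by
        rw [sum_congr rfl fun R hR => by rw [(mem_filter.1 hR).2], sum_const, nsmul_eq_mul]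
    _ ≤ 2 * (Fintype.card U : ℝ) ^ k * f k := by
        refine mul_le_mul_of_nonneg_right ?_ (hf k)
        exact_mod_cast (card_le_card (filter_subset_filter _ (subset_univ S))).trans
          (card_filter_min_card_sdiff_eq_le k)

end Cuts

theorem pi_bernoulli_outBoundary_unsampled_le {U : Type*} (A : Finset (U × U)) (R : Finset U)
    (q : ℝ≥0) (hq : q ≤ 1) {e : ℝ} (he : 0 ≤ e) (hout : e ≤ #(outBoundary A R)) :
    Measure.pi (fun _ : A => (PMF.bernoulli q hq).toMeasure)
        {ω : A → Bool | ∀ a : A, (a : U × U) ∈ outBoundary A R → ω a = false}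
      ≤ ENNReal.ofReal (((1 - q : ℝ≥0) : ℝ) ^ e) := by
  classical
  have hcard : #((outBoundary A R).subtype (· ∈ A)) = #(outBoundary A R) := by
    rw [card_subtype]
    exact congrArg card (filter_true_of_mem fun _ h => (mem_filter.1 h).1)
  have hset := pi_bernoulli_setOf_forall_mem_eq_false q hq ((outBoundary A R).subtype (· ∈ A))
  simp only [mem_subtype, hcard] at hset
  exact hset.le.trans (ENNReal.coe_pow_le_ofReal_rpow tsub_le_self he hout)

/-- **Sampling out-arcs of balanced cuts.** Let `U` be a finite vertex set with
`|U| = N`, `A ⊆ U × U` an arc set, `β ≥ 1`, `L > 0`, and suppose every nontrivial cut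
`R` with `β·|∂⁺R| ≥ |∂R|` satisfies `|∂⁺R| ≥ L·min{|R|, |U∖R|}`. Sampling each arc of
`A` independently with probability `p`, the probability that some nontrivial cut `R`
with `β·|∂⁺R| ≥ |∂R|` has no sampled out-arc is at most
`∑_{k=1}^{⌊N/2⌋} 2·N^k·(1-p)^{kL}`. -/
theorem sparsifier_failure_probability {U : Type*} [Fintype U] [DecidableEq U] (N : ℕ)
    (hN : Fintype.card U = N) (A : Finset (U × U)) (β L : ℝ) (hL : 0 < L)
    (p : ℝ≥0∞) (hp : p ≤ 1)
    (hexp : ∀ R : Finset U, R ≠ ∅ → R ≠ Finset.univ →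
      β * ((outBoundary A R).card : ℝ) ≥ ((boundary A R).card : ℝ) →
      ((outBoundary A R).card : ℝ)
        ≥ L * min (R.card : ℝ) ((Finset.univ \ R).card : ℝ)) :
    (Measure.pi fun _ : A => (PMF.bernoulli p.toNNReal
      (by simpa using ENNReal.toNNReal_mono ENNReal.one_ne_top hp)).toMeasure)
      {ω : A → Bool | ∃ R : Finset U, R ≠ ∅ ∧ R ≠ Finset.univ ∧
        β * ((outBoundary A R).card : ℝ) ≥ ((boundary A R).card : ℝ) ∧
        ∀ a : A, (a : U × U) ∈ outBoundary A R → ω a = false}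
      ≤ ENNReal.ofReal
        (∑ k ∈ Finset.Icc 1 (N / 2), 2 * (N : ℝ) ^ k * (1 - p.toReal) ^ ((k : ℝ) * L)) := by
  subst hN
  have hp' : p.toNNReal ≤ 1 := by simpa using ENNReal.toNNReal_mono ENNReal.one_ne_top hp
  have hsub_toReal : ((1 - p.toNNReal : ℝ≥0) : ℝ) = 1 - p.toReal := by
    rw [NNReal.coe_sub hp', NNReal.coe_one, ENNReal.coe_toNNReal_eq_toReal]
  set S := (univ : Finset (Finset U)).filter fun R => R ≠ ∅ ∧ R ≠ univ ∧
    β * ((outBoundary A R).card : ℝ) ≥ ((boundary A R).card : ℝ)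
  set E : Finset U → Set (A → Bool) :=
    fun R => {ω | ∀ a : A, (a : U × U) ∈ outBoundary A R → ω a = false}
  calc _ ≤ Measure.pi _ (⋃ R ∈ S, E R) := measure_mono <| by
        rintro ω ⟨R, hR, hRU, hβR, hω⟩
        exact Set.mem_biUnion (by simp [S, hR, hRU, hβR]) hω
    _ ≤ _ := measure_biUnion_finset_le S E
    _ ≤ ∑ R ∈ S, ENNReal.ofReal ((1 - p.toReal) ^ ((min #R #(univ \ R) : ℕ) * L)) := by
        refine sum_le_sum fun R hRS => ?_
        obtain ⟨-, hR, hRU, hβR⟩ := mem_filter.1 hRS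
        rw [← hsub_toReal]
        refine pi_bernoulli_outBoundary_unsampled_le A R _ hp' (by positivity) ?_
        have := hexp R hR hRU hβR
        push_cast
        linarith
    _ = ENNReal.ofReal (∑ R ∈ S, (1 - p.toReal) ^ ((min #R #(univ \ R) : ℕ) * L)) :=
        (ENNReal.ofReal_sum_of_nonneg fun R _ => by rw [← hsub_toReal]; positivity).symm
    _ ≤ _ := ENNReal.ofReal_le_ofReal <| sum_min_card_sdiff_le
        (fun R hR => ⟨(mem_filter.1 hR).2.1, (mem_filter.1 hR).2.2.1⟩)
        (fun k => (1 - p.toReal) ^ ((k : ℝ) * L)) fun k => by rw [← hsub_toReal]; positivity
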